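/- Let (G₁,P₁,θ₁) and (G₂,P₂,θ₂) be algebraic dynamical systems and let (φ_G,φ_P) be an admissible morphism between them. If p ∈ P₁ is such that θ_{2,φ_P(p)} is an automorphism of G₂ (i.e. surjective), then θ_{1,p} is an automorphism of G₁ (i.e. surjective). -/

import Mathlib

/-
Taking `q = p` in condition (v): if `θ_{2,φ_P(p)}` is onto, the left-hand side is the preimage of
`φ_G(G₁)`, i.e. all of `G₁`, so `θ_{1,p}(G₁) · θ_{1,p}(G₁) = G₁`. The image of an endomorphism
is a subgroup and hence closed under products, so `θ_{1,p}(G₁) = G₁`.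
-/

open Pointwise

/-- The principal right ideal `pS` of a monoid `S`. -/
def rIdeal {S : Type*} [Monoid S] (p : S) : Set S :=
  Set.range fun s => p * s

/-- An algebraic dynamical system: a group `G`, a right LCM monoid `P`, and an action `θ` of
`P` by injective group endomorphisms of `G` which respects the order on `P`. -/
structure AlgDynSys (G P : Type*) [Group G] [Monoid P] where
  θ : P → G → G
  θ_hom : ∀ p a b, θ p (a * b) = θ p a * θ p b
  θ_one : ∀ a, θ 1 a = a
  θ_mul : ∀ p q a, θ (p * q) a = θ p (θ q a)
  θ_inj : ∀ p, Function.Injective (θ p)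
  left_cancel : ∀ a b c : P, a * b = a * c → b = c
  lcm : ∀ p q : P, rIdeal p ∩ rIdeal q = ∅ ∨ ∃ r, rIdeal p ∩ rIdeal q = rIdeal r
  respects : ∀ p q r : P, rIdeal p ∩ rIdeal q = rIdeal r →
    Set.range (θ p) ∩ Set.range (θ q) = Set.range (θ r)

namespace AlgDynSys

variable {G P : Type*} [Group G] [Monoid P]

/-- The multiplication of the semidirect product `G ⋊_θ P` on `G × P`. -/
def sdMul (A : AlgDynSys G P) (x y : G × P) : G × P :=
  (x.1 * A.θ x.2 y.1, x.2 * y.2)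

/-- The principal right ideal `x · (G ⋊_θ P)` of the semidirect product. -/
def sdIdeal (A : AlgDynSys G P) (x : G × P) : Set (G × P) :=
  Set.range (A.sdMul x)

end AlgDynSys

/-- A morphism of algebraic dynamical systems: a group homomorphism `φG` and an
identity-preserving monoid homomorphism `φP`, intertwining the actions. -/
structure ADSHom {G₁ P₁ G₂ P₂ : Type*} [Group G₁] [Monoid P₁] [Group G₂] [Monoid P₂]
    (A₁ : AlgDynSys G₁ P₁) (A₂ : AlgDynSys G₂ P₂) where
  φG : G₁ →* G₂
  φP : P₁ →* P₂
  equivariant : ∀ p g, φG (A₁.θ p g) = A₂.θ (φP p) (φG g)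

/-- For `X ⊆ P₁`, the right ideal `φ(X)P₂ = {φ(x)·s : x ∈ X, s ∈ P₂}` of `P₂`. -/
def imgIdeal {P₁ P₂ : Type*} [Monoid P₁] [Monoid P₂] (φ : P₁ → P₂) (X : Set P₁) : Set P₂ :=
  {y | ∃ x ∈ X, ∃ s : P₂, y = φ x * s}

/-- Admissibility of a morphism of algebraic dynamical systems: conditions (iv) and (v). -/
def ADSHom.Admissible {G₁ P₁ G₂ P₂ : Type*} [Group G₁] [Monoid P₁] [Group G₂] [Monoid P₂]
    {A₁ : AlgDynSys G₁ P₁} {A₂ : AlgDynSys G₂ P₂} (f : ADSHom A₁ A₂) : Prop :=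
  (∀ p q : P₁, rIdeal (f.φP p) ∩ rIdeal (f.φP q) = imgIdeal f.φP (rIdeal p ∩ rIdeal q)) ∧
  (∀ p q : P₁, (rIdeal p ∩ rIdeal q).Nonempty →
    f.φG ⁻¹' (Set.range f.φG ∩ (Set.range (A₂.θ (f.φP p)) * Set.range (A₂.θ (f.φP q)))) =
      Set.range (A₁.θ p) * Set.range (A₁.θ q))

lemma rIdeal_inter_self_nonempty {S : Type*} [Monoid S] (p : S) :
    (rIdeal p ∩ rIdeal p).Nonempty :=
  ⟨p, ⟨1, mul_one p⟩, ⟨1, mul_one p⟩⟩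

namespace AlgDynSys

variable {G P : Type*} [Group G] [Monoid P]

def θHom (A : AlgDynSys G P) (p : P) : G →* G :=
  MonoidHom.mk' (A.θ p) (A.θ_hom p)

lemma range_θ_mul_self (A : AlgDynSys G P) (p : P) :
    Set.range (A.θ p) * Set.range (A.θ p) = Set.range (A.θ p) :=
  Submonoid.coe_mul_self_eq (MonoidHom.mrange (A.θHom p))

end AlgDynSys

lemma ADSHom.Admissible.range_mul_range_eq_univ {G₁ P₁ G₂ P₂ : Type*}
    [Group G₁] [Monoid P₁] [Group G₂] [Monoid P₂]
    {A₁ : AlgDynSys G₁ P₁} {A₂ : AlgDynSys G₂ P₂} {f : ADSHom A₁ A₂} (hf : f.Admissible)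
    {p q : P₁} (hpq : (rIdeal p ∩ rIdeal q).Nonempty)
    (hp : Function.Surjective (A₂.θ (f.φP p))) (hq : Function.Surjective (A₂.θ (f.φP q))) :
    Set.range (A₁.θ p) * Set.range (A₁.θ q) = Set.univ := by
  rw [← hf.2 p q hpq, Set.range_eq_univ.mpr hp, Set.range_eq_univ.mpr hq, Set.univ_mul_univ,
    Set.inter_univ, Set.preimage_range]

/-- an admissible morphism forces `θ_{1,p}` to be an automorphism whenever
`θ_{2,φ_P(p)}` is an automorphism. -/
theorem admissible_surjective_of_surjective {G₁ P₁ G₂ P₂ : Type*}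
    [Group G₁] [Monoid P₁] [Group G₂] [Monoid P₂]
    (A₁ : AlgDynSys G₁ P₁) (A₂ : AlgDynSys G₂ P₂) (f : ADSHom A₁ A₂)
    (hf : f.Admissible) (p : P₁)
    (hsurj : Function.Surjective (A₂.θ (f.φP p))) :
    Function.Surjective (A₁.θ p) := by
  rw [← Set.range_eq_univ, ← A₁.range_θ_mul_self p]
  exact hf.range_mul_range_eq_univ (rIdeal_inter_self_nonempty p) hsurj hsurj
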